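/- arXiv:1310.7161 — 4 statements merged into one kernel-verified Lean document; each statement's English description precedes it below -/
import Mathlib

section
/- Let V^p denote the value function of the randomly-terminated problem with termination probability p, under assumptions that self-transitions are allowed at zero cost and all other transitions have nonnegative cost. If 0 < p_1 ≤ p_2 < 1 and for every node a p_2-optimal path eventually reaches a motionless node, then V^{p_1}(x) ≤ V^{p_2}(x) for all nodes x. -/
open scoped BigOperators

theorem stmt5 {X : Type*} [Fintype X] (N : X → Finset X) (hself : ∀ x, x ∈ N x)
    (K : X → X → ℝ) (hK0 : ∀ x, K x x = 0) (hKpos : ∀ x y, y ≠ x → 0 ≤ K x y)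
    (q V1 V2 : X → ℝ) (p1 p2 : ℝ) (h1 : 0 < p1) (h12 : p1 ≤ p2) (h2 : p2 < 1)
    (hDP1 : ∀ x, V1 x = (N x).inf' ⟨x, hself x⟩
      (fun y => K x y + p1 * q y + (1 - p1) * V1 y))
    (hDP2 : ∀ x, V2 x = (N x).inf' ⟨x, hself x⟩
      (fun y => K x y + p2 * q y + (1 - p2) * V2 y))
    -- a p2-optimal successor map whose iterates reach a motionless node from every state
    (σ : X → X) (hσ : ∀ x, σ x ∈ N x)
    (hopt : ∀ x, V2 x = K x (σ x) + p2 * q (σ x) + (1 - p2) * V2 (σ x))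
    (hreach : ∀ x, ∃ n : ℕ, V2 (σ^[n] x) = q (σ^[n] x)) :
    ∀ x, V1 x ≤ V2 x := by
  have hV1q : ∀ x, V1 x ≤ q x := by
    intro x
    have h := (hDP1 x).le.trans (Finset.inf'_le _ (hself x))
    rw [hK0 x] at h
    nlinarith
  have hV2q : ∀ x, V2 x ≤ q x := by
    intro x
    have h := (hDP2 x).le.trans (Finset.inf'_le _ (hself x))
    rw [hK0 x] at h
    nlinarith
  have key : ∀ n x, V2 (σ^[n] x) = q (σ^[n] x) → V1 x ≤ V2 x := by
    intro n
    induction n with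
    | zero =>
      intro x hx
      simp only [Function.iterate_zero, id_eq] at hx
      rw [hx]; exact hV1q x
    | succ n ih =>
      intro x hx
      rw [Function.iterate_succ_apply] at hx
      have hy := ih (σ x) hx
      have h1' := (hDP1 x).le.trans (Finset.inf'_le _ (hσ x))
      have h2' := hopt x
      nlinarith [hV2q (σ x)]
  intro x
  obtain ⟨n, hn⟩ := hreach x
  exact key n x hn
end

section
/- Every node x_i in the set M^1_0 = {x_i : q_i < K_{ij} + q_j for all x_j ∈ N(x_i) with j ≠ i} is motionless for sufficiently large p < 1: there exists p < 1 such that for every path y starting at x_i with y_1 ≠ x_i, the expected cost satisfies J^p(y) ≥ q_i (assuming all K_{ij} ≥ 0, K_{ii} = 0, and q_i > 0). -/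
open scoped BigOperators

/-- Cost of the finite path `y 0, ..., y t`. -/
noncomputable def pathCost {X : Type*} (K : X → X → ℝ) (q : X → ℝ) (y : ℕ → X) (t : ℕ) : ℝ :=
  (∑ k ∈ Finset.range t, K (y k) (y (k + 1))) + q (y t)

/-- Expected cost of an infinite path with per-step termination probability `p`:
`J(y) = ∑_{t=1}^∞ (1-p)^{t-1} p · Cost(y_0,...,y_t)`. -/
noncomputable def Jcost {X : Type*} (K : X → X → ℝ) (q : X → ℝ) (p : ℝ) (y : ℕ → X) : ℝ :=
  ∑' t : ℕ, (1 - p) ^ t * p * pathCost K q y (t + 1)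

/-!
All path costs are nonnegative, so `J^p(y)` is at least its first term `p · (K i y₁ + q y₁)`.
Every neighbour `j ≠ i` satisfies `q i < K i j + q j`, and there are finitely many, so a single
`p < 1` makes `p · (K i j + q j) ≥ q i` for all of them. Summability of the series must still be
checked, since `tsum` of a non-summable series is `0`.
-/

section PathCost

variable {X : Type*} {K : X → X → ℝ} {q : X → ℝ}

lemma pathCost_nonneg (hK : ∀ a b, 0 ≤ K a b) (hq : ∀ a, 0 ≤ q a) (y : ℕ → X) (t : ℕ) :
    0 ≤ pathCost K q y t :=
  add_nonneg (Finset.sum_nonneg fun _ _ => hK _ _) (hq _)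

lemma abs_pathCost_le {B Q : ℝ} (hB : ∀ a b, |K a b| ≤ B) (hQ : ∀ a, |q a| ≤ Q)
    (y : ℕ → X) (t : ℕ) : |pathCost K q y t| ≤ t * B + Q := by
  calc |pathCost K q y t|
      ≤ (∑ k ∈ Finset.range t, |K (y k) (y (k + 1))|) + |q (y t)| :=
        (abs_add_le _ _).trans (add_le_add_left (Finset.abs_sum_le_sum_abs _ _) _)
    _ ≤ (∑ _k ∈ Finset.range t, B) + Q := add_le_add (Finset.sum_le_sum fun _ _ => hB _ _) (hQ _)
    _ = t * B + Q := by simp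

/-- On a finite state space the costs grow at most linearly in `t`, which the geometric
weights `(1 - p) ^ t` absorb. -/
lemma summable_Jcost_terms [Finite X] {p : ℝ} (hp0 : 0 < p)
    (hp1 : p ≤ 1) (y : ℕ → X) :
    Summable fun t : ℕ => (1 - p) ^ t * p * pathCost K q y (t + 1) := by
  obtain ⟨B, hB⟩ := (Set.finite_range fun ab : X × X => |K ab.1 ab.2|).bddAbove
  obtain ⟨Q, hQ⟩ := (Set.finite_range fun a => |q a|).bddAbove
  have hB' : ∀ a b, |K a b| ≤ B := fun a b => hB ⟨(a, b), rfl⟩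
  have hQ' : ∀ a, |q a| ≤ Q := fun a => hQ ⟨a, rfl⟩
  have hr : ‖1 - p‖ < 1 := by rw [Real.norm_eq_abs, abs_lt]; constructor <;> linarith
  have hgeom : Summable fun t : ℕ =>
      p * B * ((t : ℝ) ^ 1 * (1 - p) ^ t) + p * (B + Q) * (1 - p) ^ t :=
    ((summable_pow_mul_geometric_of_norm_lt_one 1 hr).mul_left _).add
      ((summable_geometric_of_norm_lt_one hr).mul_left _)
  refine hgeom.of_norm_bounded fun t => ?_
  have hpow : 0 ≤ (1 - p) ^ t := pow_nonneg (by linarith) t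
  calc ‖(1 - p) ^ t * p * pathCost K q y (t + 1)‖
      = (1 - p) ^ t * p * |pathCost K q y (t + 1)| := by
        rw [Real.norm_eq_abs, abs_mul, abs_mul, abs_of_nonneg hpow, abs_of_pos hp0]
    _ ≤ (1 - p) ^ t * p * ((t + 1 : ℕ) * B + Q) :=
        mul_le_mul_of_nonneg_left (abs_pathCost_le hB' hQ' y _) (by positivity)
    _ = _ := by push_cast; ring

lemma mul_pathCost_one_le_Jcost [Finite X] (hK : ∀ a b, 0 ≤ K a b) (hq : ∀ a, 0 ≤ q a) {p : ℝ}
    (hp0 : 0 < p) (hp1 : p ≤ 1) (y : ℕ → X) :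
    p * pathCost K q y 1 ≤ Jcost K q p y := by
  have h := (summable_Jcost_terms (K := K) (q := q) hp0 hp1 y).le_tsum 0 fun t _ =>
    mul_nonneg (mul_nonneg (pow_nonneg (by linarith) t) hp0.le) (pathCost_nonneg hK hq y _)
  simpa [Jcost] using h

end PathCost

/-- The witness is `p = a / min_{j ∈ s} f j`, or anything in `(0, 1)` when `s` is empty. -/
lemma Finset.exists_pos_lt_one_le_mul {ι : Type*} (s : Finset ι) (f : ι → ℝ) {a : ℝ}
    (ha : 0 < a) (hf : ∀ j ∈ s, a < f j) :
    ∃ p : ℝ, 0 < p ∧ p < 1 ∧ ∀ j ∈ s, a ≤ p * f j := by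
  rcases s.eq_empty_or_nonempty with rfl | hs
  · exact ⟨1 / 2, by norm_num, by norm_num, by simp⟩
  obtain ⟨j₀, hj₀, hmin⟩ := s.exists_min_image f hs
  have hf₀ : 0 < f j₀ := ha.trans (hf j₀ hj₀)
  refine ⟨a / f j₀, div_pos ha hf₀, (div_lt_one hf₀).2 (hf j₀ hj₀), fun j hj => ?_⟩
  rw [div_mul_eq_mul_div, le_div_iff₀ hf₀]
  exact mul_le_mul_of_nonneg_left (hmin j hj) ha.le

theorem stmt9_general {X : Type*} [Fintype X] (N : X → Finset X)
    (K : X → X → ℝ) (hK0 : ∀ x, K x x = 0) (hKpos : ∀ x y, y ≠ x → 0 ≤ K x y)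
    (q : X → ℝ) (hq : ∀ x, 0 < q x)
    (i : X) (hi : ∀ j ∈ N i, j ≠ i → q i < K i j + q j) :
    ∃ p : ℝ, 0 < p ∧ p < 1 ∧
      ∀ y : ℕ → X, y 0 = i → (∀ k, y (k + 1) ∈ N (y k)) → y 1 ≠ i →
        q i ≤ Jcost K q p y := by
  classical
  have hK : ∀ a b, 0 ≤ K a b := fun a b => by
    rcases eq_or_ne b a with rfl | hba
    · exact (hK0 b).ge
    · exact hKpos a b hba
  obtain ⟨p, hp0, hp1, hp⟩ := ((N i).erase i).exists_pos_lt_one_le_mul (fun j => K i j + q j)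
    (hq i) fun j hj => hi j (Finset.mem_of_mem_erase hj) (Finset.ne_of_mem_erase hj)
  refine ⟨p, hp0, hp1, fun y hy0 hyN hy1 => ?_⟩
  have hfirst : pathCost K q y 1 = K i (y 1) + q (y 1) := by simp [pathCost, hy0]
  calc q i ≤ p * pathCost K q y 1 :=
        hfirst ▸ hp (y 1) (Finset.mem_erase.2 ⟨hy1, hy0 ▸ hyN 0⟩)
    _ ≤ Jcost K q p y := mul_pathCost_one_le_Jcost hK (fun a => (hq a).le) hp0 hp1.le y

theorem stmt9 {X : Type*} [Fintype X] (N : X → Finset X) (hself : ∀ x, x ∈ N x)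
    (K : X → X → ℝ) (hK0 : ∀ x, K x x = 0) (hKpos : ∀ x y, y ≠ x → 0 ≤ K x y)
    (q : X → ℝ) (hq : ∀ x, 0 < q x)
    (i : X) (hi : ∀ j ∈ N i, j ≠ i → q i < K i j + q j) :
    ∃ p : ℝ, 0 < p ∧ p < 1 ∧
      ∀ y : ℕ → X, y 0 = i → (∀ k, y (k + 1) ∈ N (y k)) → y 1 ≠ i →
        q i ≤ Jcost K q p y :=
  stmt9_general N K hK0 hKpos q hq i hi
end

section
/- (Loop repetition) If y ∈ Y(x) is a minimizing path with y_0 = y_m for some m ≥ 1, and ỹ is the periodic path repeating the loop (y_0, y_1, ..., y_{m-1}) forever, then J(ỹ) = J(y). In particular, J(ỹ) = (Σ_{i=0}^{m-1} (K(y_i,y_{i+1}) + p·q(y_{i+1}))(1-p)^i) / (1 - (1-p)^m). -/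
open scoped BigOperators

/-- Expected cost of an infinite path, in the infinite-horizon form
`J(y) = ∑_{k=0}^∞ (1-p)^k (K(y_k,y_{k+1}) + p·q(y_{k+1}))`. -/
noncomputable def Jinf {X : Type*} (K : X → X → ℝ) (q : X → ℝ) (p : ℝ) (y : ℕ → X) : ℝ :=
  ∑' k : ℕ, (1 - p) ^ k * (K (y k) (y (k + 1)) + p * q (y (k + 1)))

/-!
Cutting a path after its first `m` steps gives `J(y) = S + (1-p)^m J(y_{m+·})`, where `S` is the
discounted cost of the loop `y_0, …, y_m`. For the periodic path `ỹ` this is the fixed-point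
equation `J(ỹ) = S + (1-p)^m J(ỹ)`, whence `J(ỹ) = S / (1 - (1-p)^m)`. Both `ỹ` and the tail
`y_{m+·}` are admissible paths from `y_0 = y_m`, so minimality gives `J(y) ≤ J(ỹ)` and
`J(y) ≤ J(y_{m+·})`; the latter turns the cut into `J(y) ≥ S + (1-p)^m J(y)`,
i.e. `J(y) ≥ J(ỹ)`.
-/

section LoopRepetition

variable {X : Type*}

theorem apply_mod_eq_of_le {y : ℕ → X} {m j : ℕ} (hloop : y 0 = y m) (hj : j ≤ m) :
    y (j % m) = y j := by
  rcases hj.lt_or_eq with hj | rfl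
  · rw [Nat.mod_eq_of_lt hj]
  · rw [Nat.mod_self, hloop]

theorem apply_succ_mod_eq {y : ℕ → X} {m : ℕ} (hm : m ≠ 0) (hloop : y 0 = y m) (k : ℕ) :
    y ((k + 1) % m) = y (k % m + 1) := by
  rw [← Nat.mod_add_mod]
  exact apply_mod_eq_of_le hloop (Nat.mod_lt k (Nat.pos_of_ne_zero hm))

theorem chain_mod_of_chain {R : X → X → Prop} {y : ℕ → X} (hy : ∀ k, R (y k) (y (k + 1)))
    {m : ℕ} (hm : m ≠ 0) (hloop : y 0 = y m) (k : ℕ) :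
    R (y (k % m)) (y ((k + 1) % m)) := by
  rw [apply_succ_mod_eq hm hloop]
  exact hy _

variable (K : X → X → ℝ) (q : X → ℝ) {p : ℝ}

theorem summable_Jinf_terms [Finite X] (hr : |1 - p| < 1) (y : ℕ → X) :
    Summable fun k => (1 - p) ^ k * (K (y k) (y (k + 1)) + p * q (y (k + 1))) := by
  obtain ⟨C, hC⟩ := Finite.exists_le fun xx : X × X => |K xx.1 xx.2 + p * q xx.2|
  refine .of_norm_bounded ((summable_geometric_of_lt_one (abs_nonneg _) hr).mul_left C) fun k => ?_
  rw [norm_mul, norm_pow, Real.norm_eq_abs, Real.norm_eq_abs, mul_comm]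
  exact mul_le_mul_of_nonneg_right (hC (y k, y (k + 1))) (pow_nonneg (abs_nonneg _) k)

theorem Jinf_eq_sum_add_shift [Finite X] (hr : |1 - p| < 1) (y : ℕ → X) (m : ℕ) :
    Jinf K q p y =
      ∑ i ∈ Finset.range m, (K (y i) (y (i + 1)) + p * q (y (i + 1))) * (1 - p) ^ i
        + (1 - p) ^ m * Jinf K q p (fun k => y (k + m)) := by
  rw [Jinf, ← (summable_Jinf_terms K q hr y).sum_add_tsum_nat_add m, Jinf, ← tsum_mul_left]
  congr 1
  · exact Finset.sum_congr rfl fun i _ => mul_comm _ _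
  · congr 1
    funext k
    rw [Nat.add_right_comm, pow_add]
    ring

theorem Jinf_eq_div_of_periodic [Finite X] (hr : |1 - p| < 1) {z : ℕ → X} {m : ℕ}
    (hz : Function.Periodic z m) (hm : m ≠ 0) :
    Jinf K q p z =
      (∑ i ∈ Finset.range m, (K (z i) (z (i + 1)) + p * q (z (i + 1))) * (1 - p) ^ i)
        / (1 - (1 - p) ^ m) := by
  have hpow : (1 - p) ^ m < 1 :=
    (le_abs_self _).trans_lt (abs_pow (1 - p) m ▸ pow_lt_one₀ (abs_nonneg _) hr hm)
  have hfix := Jinf_eq_sum_add_shift K q hr z m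
  rw [show (fun k => z (k + m)) = z from funext hz] at hfix
  rw [eq_div_iff (by linarith)]
  linarith

theorem div_le_Jinf_of_le_Jinf_shift [Finite X] (hp : 0 < p) (hp1 : p ≤ 1) {y : ℕ → X}
    {m : ℕ} (hm : m ≠ 0) (hshift : Jinf K q p y ≤ Jinf K q p (fun k => y (k + m))) :
    (∑ i ∈ Finset.range m, (K (y i) (y (i + 1)) + p * q (y (i + 1))) * (1 - p) ^ i)
        / (1 - (1 - p) ^ m) ≤ Jinf K q p y := by
  have hr : 0 ≤ 1 - p := by linarith
  have hpow : (1 - p) ^ m < 1 := pow_lt_one₀ hr (by linarith) hm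
  have hcut := Jinf_eq_sum_add_shift K q (p := p) (abs_lt.2 ⟨by linarith, by linarith⟩) y m
  rw [div_le_iff₀ (by linarith)]
  nlinarith [mul_le_mul_of_nonneg_left hshift (pow_nonneg hr m)]

end LoopRepetition

theorem stmt13 {X : Type*} [Fintype X] (N : X → Finset X)
    (K : X → X → ℝ) (q : X → ℝ) (p : ℝ) (hp : 0 < p) (hp1 : p < 1)
    (y : ℕ → X) (hpath : ∀ k, y (k + 1) ∈ N (y k))
    (m : ℕ) (hm : 1 ≤ m) (hloop : y 0 = y m)
    (hmin : ∀ z : ℕ → X, z 0 = y 0 → (∀ k, z (k + 1) ∈ N (z k)) →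
      Jinf K q p y ≤ Jinf K q p z) :
    Jinf K q p (fun j => y (j % m)) = Jinf K q p y ∧
      Jinf K q p (fun j => y (j % m)) =
        (∑ i ∈ Finset.range m, (K (y i) (y (i + 1)) + p * q (y (i + 1))) * (1 - p) ^ i)
          / (1 - (1 - p) ^ m) := by
  have hm0 : m ≠ 0 := by omega
  have hcost : Jinf K q p (fun j => y (j % m)) =
      (∑ i ∈ Finset.range m, (K (y i) (y (i + 1)) + p * q (y (i + 1))) * (1 - p) ^ i)
        / (1 - (1 - p) ^ m) := by
    have hper : Function.Periodic (fun j => y (j % m)) m := (Nat.periodic_mod m).comp y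
    rw [Jinf_eq_div_of_periodic K q (p := p) (abs_lt.2 ⟨by linarith, by linarith⟩) hper hm0]
    refine congrArg (· / _) (Finset.sum_congr rfl fun i hi => ?_)
    have hi : i < m := Finset.mem_range.1 hi
    simp only [apply_mod_eq_of_le hloop hi.le, apply_mod_eq_of_le hloop hi]
  have hle : Jinf K q p y ≤ Jinf K q p (fun j => y (j % m)) :=
    hmin _ (by simp) (chain_mod_of_chain (R := fun a b => b ∈ N a) hpath hm0 hloop)
  have hshift : Jinf K q p y ≤ Jinf K q p (fun k => y (k + m)) :=
    hmin _ (by simpa using hloop.symm) fun k => by simpa [Nat.add_right_comm] using hpath (k + m)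
  have hge := div_le_Jinf_of_le_Jinf_shift K q hp hp1.le hm0 hshift
  exact ⟨le_antisymm (hcost ▸ hge) hle, hcost⟩
end

section
/- (Causality and equivalence of the semi-Lagrangian update) Let Ξ = {(ξ_1,ξ_2) : ξ_1,ξ_2 ≥ 0, ξ_1+ξ_2 = 1}, τ(ξ) = (h/f)√(ξ_1² + ξ_2²), and C(ξ) = [(K + λq)τ(ξ) + ξ_1 V_1 + ξ_2 V_2] / (1 + λτ(ξ)). Suppose ξ* is a minimizer of C over Ξ with both components strictly positive, and V^{12} = C(ξ*) < q, with K ≥ 0, λ, h, f > 0. Then V^{12} > V_1, V^{12} > V_2, and V^{12} satisfies the quadratic equation f²[(V^{12} - V_1)² + (V^{12} - V_2)²] = h²(K + λq - λV^{12})². -/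
/-!
Restricted to the edge `ξ = (x, 1 - x)` the cost is a quotient `N x / D x` with an interior local
minimum at `s = ξ*₁`, so `N' = V D'` there, where `V = N s / D s = V¹²`. Combined with the value
equation `V D = N`, this gives `V - Vᵢ = (K + λq - λV) ∂τ/∂ξᵢ` for `i = 1, 2`. The right-hand sides
are positive because `V < q`, and since `|∇τ| = h / f` the sum of their squares is
`(h / f)² (K + λq - λV)²`.
-/

open Filter Topology

theorem IsLocalMin.hasDerivAt_num_eq_div_mul {N D : ℝ → ℝ} {N' D' s : ℝ}
    (hmin : IsLocalMin (fun x => N x / D x) s) (hN : HasDerivAt N N' s) (hD : HasDerivAt D D' s)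
    (hDs : D s ≠ 0) : N' = N s / D s * D' := by
  have h := hmin.hasDerivAt_eq_zero (hN.div hD hDs)
  field_simp at h ⊢
  linear_combination h

theorem isLocalMin_comp_edge {C : ℝ × ℝ → ℝ} {ξ : ℝ × ℝ} (h₁ : 0 < ξ.1) (h₂ : 0 < ξ.2)
    (hsum : ξ.1 + ξ.2 = 1) (hmin : ∀ η : ℝ × ℝ, 0 ≤ η.1 → 0 ≤ η.2 → η.1 + η.2 = 1 → C ξ ≤ C η) :
    IsLocalMin (fun x => C (x, 1 - x)) ξ.1 := by
  have hξ : ξ = (ξ.1, 1 - ξ.1) := Prod.ext rfl (show ξ.2 = 1 - ξ.1 by linarith)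
  filter_upwards [Ioo_mem_nhds h₁ (by linarith : ξ.1 < 1)] with x hx
  rw [← hξ]
  exact hmin _ hx.1.le (by simp only; linarith [hx.2]) (by ring)

theorem sq_add_one_sub_sq_pos (x : ℝ) : 0 < x ^ 2 + (1 - x) ^ 2 := by
  nlinarith [sq_nonneg (2 * x - 1)]

theorem hasDerivAt_sqrt_sq_add_one_sub_sq (s : ℝ) :
    HasDerivAt (fun x => √(x ^ 2 + (1 - x) ^ 2)) ((2 * s - 1) / √(s ^ 2 + (1 - s) ^ 2)) s := by
  have hg : HasDerivAt (fun x : ℝ => x ^ 2 + (1 - x) ^ 2) (2 * (2 * s - 1)) s := by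
    refine ((hasDerivAt_pow 2 s).add (((hasDerivAt_id s).const_sub 1).pow 2)).congr_deriv ?_
    push_cast [id]
    ring
  convert hg.sqrt (sq_add_one_sub_sq_pos s).ne' using 1
  have hr := Real.sqrt_pos.mpr (sq_add_one_sub_sq_pos s)
  field_simp

-- `c * s / √(…)` and `c * (1 - s) / √(…)` are the partials of `τ = c √(ξ₁² + ξ₂²)` at `(s, 1 - s)`.
theorem sub_eq_mul_of_isLocalMin_edge {A lam c V₁ V₂ s V : ℝ}
    (hD : 1 + lam * (c * √(s ^ 2 + (1 - s) ^ 2)) ≠ 0)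
    (hmin : IsLocalMin (fun x => (A * (c * √(x ^ 2 + (1 - x) ^ 2)) + (x * V₁ + (1 - x) * V₂)) /
      (1 + lam * (c * √(x ^ 2 + (1 - x) ^ 2)))) s)
    (hV : V = (A * (c * √(s ^ 2 + (1 - s) ^ 2)) + (s * V₁ + (1 - s) * V₂)) /
      (1 + lam * (c * √(s ^ 2 + (1 - s) ^ 2)))) :
    V - V₁ = (A - lam * V) * (c * s / √(s ^ 2 + (1 - s) ^ 2)) ∧
      V - V₂ = (A - lam * V) * (c * (1 - s) / √(s ^ 2 + (1 - s) ^ 2)) := by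
  set r := √(s ^ 2 + (1 - s) ^ 2)
  have hρ := hasDerivAt_sqrt_sq_add_one_sub_sq s
  have hlin : HasDerivAt (fun x : ℝ => x * V₁ + (1 - x) * V₂) (V₁ - V₂) s := by
    refine (((hasDerivAt_id s).mul_const V₁).add
      (((hasDerivAt_id s).const_sub 1).mul_const V₂)).congr_deriv ?_
    ring
  have hstat := hmin.hasDerivAt_num_eq_div_mul (((hρ.const_mul c).const_mul A).add hlin)
    (((hρ.const_mul c).const_mul lam).const_add 1) hD
  rw [← hV] at hstat
  have hval : V * (1 + lam * (c * r)) = A * (c * r) + (s * V₁ + (1 - s) * V₂) := by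
    rw [hV, div_mul_cancel₀ _ hD]
  have hr0 : 0 < r := Real.sqrt_pos.mpr (sq_add_one_sub_sq_pos s)
  have hr2 : r ^ 2 = s ^ 2 + (1 - s) ^ 2 := Real.sq_sqrt (sq_add_one_sub_sq_pos s).le
  change A * (c * ((2 * s - 1) / r)) + (V₁ - V₂) = V * (lam * (c * ((2 * s - 1) / r))) at hstat
  field_simp at hstat ⊢
  constructor
  · linear_combination r * hval - (1 - s) * hstat + (A - lam * V) * c * hr2
  · linear_combination r * hval + s * hstat + (A - lam * V) * c * hr2

theorem stmt19 (h f lam K q V₁ V₂ : ℝ)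
    (hh : 0 < h) (hf : 0 < f) (hlam : 0 < lam) (hK : 0 ≤ K)
    -- the simplex Ξ, the time function τ, and the semi-Lagrangian cost C
    (Ξ : Set (ℝ × ℝ)) (hΞ : Ξ = {ξ : ℝ × ℝ | 0 ≤ ξ.1 ∧ 0 ≤ ξ.2 ∧ ξ.1 + ξ.2 = 1})
    (τ : ℝ × ℝ → ℝ) (hτ : ∀ ξ, τ ξ = (h / f) * Real.sqrt (ξ.1 ^ 2 + ξ.2 ^ 2))
    (C : ℝ × ℝ → ℝ)
    (hC : ∀ ξ, C ξ = ((K + lam * q) * τ ξ + (ξ.1 * V₁ + ξ.2 * V₂)) / (1 + lam * τ ξ))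
    -- ξ* is an interior minimizer of C over Ξ
    (ξstar : ℝ × ℝ) (hmem : ξstar ∈ Ξ) (h1 : 0 < ξstar.1) (h2 : 0 < ξstar.2)
    (hmin : ∀ ξ ∈ Ξ, C ξstar ≤ C ξ)
    (V12 : ℝ) (hV12 : V12 = C ξstar) (hVq : V12 < q) :
    V₁ < V12 ∧ V₂ < V12 ∧
      f ^ 2 * ((V12 - V₁) ^ 2 + (V12 - V₂) ^ 2) = h ^ 2 * (K + lam * q - lam * V12) ^ 2 := by
  subst hΞ
  obtain ⟨-, -, hsum⟩ := hmem
  obtain ⟨s, t⟩ := ξstar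
  obtain rfl : t = 1 - s := by simp only at hsum; linarith
  have hloc := isLocalMin_comp_edge h1 h2 hsum fun η h₁ h₂ h₁₂ => hmin η ⟨h₁, h₂, h₁₂⟩
  have hV : V12 = ((K + lam * q) * (h / f * √(s ^ 2 + (1 - s) ^ 2)) + (s * V₁ + (1 - s) * V₂)) /
      (1 + lam * (h / f * √(s ^ 2 + (1 - s) ^ 2))) := by
    rw [hV12, hC, hτ]
  simp only [hC, hτ] at hloc
  obtain ⟨hsub₁, hsub₂⟩ := sub_eq_mul_of_isLocalMin_edge (by positivity) hloc hV
  set r := √(s ^ 2 + (1 - s) ^ 2)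
  have hW : 0 < K + lam * q - lam * V12 := by
    have := mul_pos hlam (sub_pos.mpr hVq)
    linarith
  have hr0 : 0 < r := Real.sqrt_pos.mpr (sq_add_one_sub_sq_pos s)
  have hr2 : r ^ 2 = s ^ 2 + (1 - s) ^ 2 := Real.sq_sqrt (sq_add_one_sub_sq_pos s).le
  refine ⟨?_, ?_, ?_⟩
  · have : 0 < (K + lam * q - lam * V12) * (h / f * s / r) := by positivity
    linarith
  · have : 0 < (K + lam * q - lam * V12) * (h / f * (1 - s) / r) := by
      have : 0 < 1 - s := by linarith
      positivity
    linarith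
  · rw [hsub₁, hsub₂]
    field_simp
    exact hr2.symm
end
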